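/- arXiv:1307.0052 — 2 statements merged into one kernel-verified Lean document; each statement's English description precedes it below -/
import Mathlib

section
/- Let P_R > 0 and let T = { X Hermitian positive semidefinite : f_i(X) ≥ γ_i g_i(X) for all i = 1,…,N } be the feasible set of the power minimization problem, with optimal value P_min = inf_{X ∈ T} Re tr(E_0 X). Suppose: (a) λ̃(P_R) = 1 and it is attained at some X^opt ∈ S(P_R) (i.e. min_i f_i(X^opt)/(γ_i g_i(X^opt)) = 1 and min_i f_i(X)/(γ_i g_i(X)) ≤ 1 for all X ∈ S(P_R)); (b) P_min is attained at some X̃ ∈ T (i.e. Re tr(E_0 X̃) = P_min); (c) λ̃(P_min) is attained by some element of S(P_min). Then P_min = P_R, Re tr(E_0 X^opt) = P_R, and X^opt is an optimal solution of the power minimization problem, i.e. X^opt ∈ T and Re tr(E_0 X^opt) = P_min. -/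
open Matrix ComplexOrder

/-- The minimum of a finite family of reals indexed by `Fin N`, `N > 0`. -/
noncomputable def minOver {N : ℕ} (hN : 0 < N) (v : Fin N → ℝ) : ℝ :=
  Finset.univ.inf' (Finset.univ_nonempty_iff.mpr (Fin.pos_iff_nonempty.mp hN)) v

/-! Since the minimum SINR of `Xopt` is `1`, `Xopt` meets every SINR constraint, so
`Pmin ≤ Re tr(E₀ Xopt) ≤ P_R`. Conversely, if `Pmin < P_R`, scaling the power-optimal `X̃` by
some `c > 1` keeps it within the budget `P_R`; as the noise powers `σᵢ²` do not scale, every SINR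
of `c • X̃` then strictly exceeds `1`, contradicting `λ̃(P_R) = 1`. -/

open scoped MatrixOrder in
theorem Matrix.PosSemidef.trace_mul_nonneg {𝕜 n : Type*} [RCLike 𝕜] [Fintype n]
    {A B : Matrix n n 𝕜} (hA : A.PosSemidef) (hB : B.PosSemidef) : 0 ≤ (A * B).trace := by
  classical
  obtain ⟨a, rfl⟩ := CStarAlgebra.nonneg_iff_eq_star_mul_self.mp hA.nonneg
  rw [star_eq_conjTranspose, mul_assoc, trace_mul_comm]
  simpa only [mul_assoc] using (hB.mul_mul_conjTranspose_same a).trace_nonneg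

theorem Matrix.PosSemidef.re_trace_mul_nonneg {n : Type*} [Fintype n]
    {A B : Matrix n n ℂ} (hA : A.PosSemidef) (hB : B.PosSemidef) : 0 ≤ (A * B).trace.re :=
  (Complex.nonneg_iff.mp (hA.trace_mul_nonneg hB)).1

theorem Matrix.re_trace_mul_smul {n : Type*} [Fintype n] (A X : Matrix n n ℂ) (c : ℝ) :
    (A * (c • X)).trace.re = c * (A * X).trace.re := by
  rw [Matrix.mul_smul, trace_smul, Complex.smul_re, smul_eq_mul]

theorem exists_one_lt_mul_le_of_lt {a b : ℝ} (h : a < b) : ∃ c, 1 < c ∧ c * a ≤ b := by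
  rcases le_or_gt a 0 with ha | ha
  · exact ⟨2, one_lt_two, by linarith⟩
  · exact ⟨b / a, (one_lt_div ha).mpr h, (div_mul_cancel₀ b ha.ne').le⟩

theorem minOver_le {N : ℕ} (hN : 0 < N) (v : Fin N → ℝ) (i : Fin N) : minOver hN v ≤ v i :=
  Finset.inf'_le _ (Finset.mem_univ i)

theorem lt_minOver_iff {N : ℕ} (hN : 0 < N) {v : Fin N → ℝ} {a : ℝ} :
    a < minOver hN v ↔ ∀ i, a < v i := by
  simp [minOver, Finset.lt_inf'_iff]

section SINR

variable {M N : ℕ} {E1 E2 : Fin N → Matrix (Fin M) (Fin M) ℂ} {γ σ : Fin N → ℝ}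

theorem interference_add_noise_pos (hE2 : ∀ i, (E2 i).PosSemidef) (hγ : ∀ i, 0 < γ i)
    (hσ : ∀ i, 0 < σ i) {X : Matrix (Fin M) (Fin M) ℂ} (hX : X.PosSemidef) (i : Fin N) :
    0 < γ i * ((trace (E2 i * X)).re + σ i ^ 2) :=
  mul_pos (hγ i) (add_pos_of_nonneg_of_pos ((hE2 i).re_trace_mul_nonneg hX) (pow_pos (hσ i) 2))

theorem le_of_one_le_minOver (hN : 0 < N) (hE2 : ∀ i, (E2 i).PosSemidef)
    (hγ : ∀ i, 0 < γ i) (hσ : ∀ i, 0 < σ i) {X : Matrix (Fin M) (Fin M) ℂ} (hX : X.PosSemidef)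
    (h : 1 ≤ minOver hN (fun i =>
      (trace (E1 i * X)).re / (γ i * ((trace (E2 i * X)).re + σ i ^ 2))))
    (i : Fin N) : γ i * ((trace (E2 i * X)).re + σ i ^ 2) ≤ (trace (E1 i * X)).re :=
  (one_le_div (interference_add_noise_pos hE2 hγ hσ hX i)).mp (h.trans (minOver_le hN _ i))

theorem one_lt_minOver_smul (hN : 0 < N) (hE2 : ∀ i, (E2 i).PosSemidef)
    (hγ : ∀ i, 0 < γ i) (hσ : ∀ i, 0 < σ i) {X : Matrix (Fin M) (Fin M) ℂ} (hX : X.PosSemidef)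
    (hXT : ∀ i, γ i * ((trace (E2 i * X)).re + σ i ^ 2) ≤ (trace (E1 i * X)).re)
    {c : ℝ} (hc : 1 < c) :
    1 < minOver hN (fun i =>
      (trace (E1 i * (c • X))).re / (γ i * ((trace (E2 i * (c • X))).re + σ i ^ 2))) := by
  refine (lt_minOver_iff hN).mpr fun i => ?_
  rw [one_lt_div (interference_add_noise_pos hE2 hγ hσ (hX.smul (by linarith)) i),
    re_trace_mul_smul, re_trace_mul_smul]
  have hnoise : 0 < (c - 1) * (γ i * σ i ^ 2) :=
    mul_pos (by linarith) (mul_pos (hγ i) (pow_pos (hσ i) 2))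
  nlinarith [hXT i]

end SINR

theorem stmt1_general {M N : ℕ} (hN : 0 < N)
    (E1 E2 : Fin N → Matrix (Fin M) (Fin M) ℂ)
    (hE2 : ∀ i, (E2 i).PosSemidef)
    (E0 : Matrix (Fin M) (Fin M) ℂ)
    (γ σ : Fin N → ℝ) (hγ : ∀ i, 0 < γ i) (hσ : ∀ i, 0 < σ i)
    (PR Pmin : ℝ)
    -- (a) `λ̃(P_R) = 1` is attained at `Xopt ∈ S(P_R)`
    (Xopt : Matrix (Fin M) (Fin M) ℂ)
    (hXoptPSD : Xopt.PosSemidef) (hXoptP : (Matrix.trace (E0 * Xopt)).re ≤ PR)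
    (hXoptval : minOver hN (fun i =>
        (Matrix.trace (E1 i * Xopt)).re /
          (γ i * ((Matrix.trace (E2 i * Xopt)).re + σ i ^ 2))) = 1)
    (hXoptmax : ∀ X : Matrix (Fin M) (Fin M) ℂ, X.PosSemidef →
        (Matrix.trace (E0 * X)).re ≤ PR →
        minOver hN (fun i =>
          (Matrix.trace (E1 i * X)).re /
            (γ i * ((Matrix.trace (E2 i * X)).re + σ i ^ 2))) ≤ 1)
    -- (b) `Pmin` is attained at some `X̃ ∈ T`
    (Xt : Matrix (Fin M) (Fin M) ℂ)
    (hXtPSD : Xt.PosSemidef)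
    (hXtT : ∀ i, (Matrix.trace (E1 i * Xt)).re ≥
        γ i * ((Matrix.trace (E2 i * Xt)).re + σ i ^ 2))
    (hXtval : (Matrix.trace (E0 * Xt)).re = Pmin)
    (hPminlb : ∀ X : Matrix (Fin M) (Fin M) ℂ, X.PosSemidef →
        (∀ i, (Matrix.trace (E1 i * X)).re ≥
          γ i * ((Matrix.trace (E2 i * X)).re + σ i ^ 2)) →
        Pmin ≤ (Matrix.trace (E0 * X)).re) :
    Pmin = PR ∧ (Matrix.trace (E0 * Xopt)).re = PR ∧
      (∀ i, (Matrix.trace (E1 i * Xopt)).re ≥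
        γ i * ((Matrix.trace (E2 i * Xopt)).re + σ i ^ 2)) ∧
      (Matrix.trace (E0 * Xopt)).re = Pmin := by
  have hXoptT : ∀ i, (Matrix.trace (E1 i * Xopt)).re ≥
      γ i * ((Matrix.trace (E2 i * Xopt)).re + σ i ^ 2) :=
    le_of_one_le_minOver hN hE2 hγ hσ hXoptPSD hXoptval.ge
  have hPmin_le : Pmin ≤ (Matrix.trace (E0 * Xopt)).re := hPminlb Xopt hXoptPSD hXoptT
  have hPR_le : PR ≤ Pmin := by
    by_contra! hlt
    obtain ⟨c, hc, hcPmin⟩ := exists_one_lt_mul_le_of_lt hlt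
    have hbudget : (Matrix.trace (E0 * (c • Xt))).re ≤ PR := by
      rwa [re_trace_mul_smul, hXtval]
    exact (hXoptmax _ (hXtPSD.smul (by linarith)) hbudget).not_gt
      (one_lt_minOver_smul hN hE2 hγ hσ hXtPSD hXtT hc)
  exact ⟨by linarith, by linarith, hXoptT, by linarith⟩

/-- If `λ̃(P_R) = 1` is attained at `Xopt ∈ S(P_R)`, the power-minimization optimal value
`Pmin` is attained at some `X̃` in the feasible set `T`, and `λ̃(Pmin)` is attained in
`S(Pmin)`, then `Pmin = P_R`, `Re tr(E0 Xopt) = P_R`, and `Xopt` is an optimal solution of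
the power minimization problem. -/
theorem stmt1 {M N : ℕ} (hM : 0 < M) (hN : 0 < N)
    (E1 E2 : Fin N → Matrix (Fin M) (Fin M) ℂ)
    (hE1 : ∀ i, (E1 i).PosSemidef) (hE2 : ∀ i, (E2 i).PosSemidef)
    (E0 : Matrix (Fin M) (Fin M) ℂ) (hE0 : E0.PosSemidef)
    (γ σ : Fin N → ℝ) (hγ : ∀ i, 0 < γ i) (hσ : ∀ i, 0 < σ i)
    (PR Pmin : ℝ) (hPR : 0 < PR)
    -- (a) `λ̃(P_R) = 1` is attained at `Xopt ∈ S(P_R)`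
    (Xopt : Matrix (Fin M) (Fin M) ℂ)
    (hXoptPSD : Xopt.PosSemidef) (hXoptP : (Matrix.trace (E0 * Xopt)).re ≤ PR)
    (hXoptval : minOver hN (fun i =>
        (Matrix.trace (E1 i * Xopt)).re /
          (γ i * ((Matrix.trace (E2 i * Xopt)).re + σ i ^ 2))) = 1)
    (hXoptmax : ∀ X : Matrix (Fin M) (Fin M) ℂ, X.PosSemidef →
        (Matrix.trace (E0 * X)).re ≤ PR →
        minOver hN (fun i =>
          (Matrix.trace (E1 i * X)).re /
            (γ i * ((Matrix.trace (E2 i * X)).re + σ i ^ 2))) ≤ 1)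
    -- (b) `Pmin` is attained at some `X̃ ∈ T`
    (Xt : Matrix (Fin M) (Fin M) ℂ)
    (hXtPSD : Xt.PosSemidef)
    (hXtT : ∀ i, (Matrix.trace (E1 i * Xt)).re ≥
        γ i * ((Matrix.trace (E2 i * Xt)).re + σ i ^ 2))
    (hXtval : (Matrix.trace (E0 * Xt)).re = Pmin)
    (hPminlb : ∀ X : Matrix (Fin M) (Fin M) ℂ, X.PosSemidef →
        (∀ i, (Matrix.trace (E1 i * X)).re ≥
          γ i * ((Matrix.trace (E2 i * X)).re + σ i ^ 2)) →
        Pmin ≤ (Matrix.trace (E0 * X)).re)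
    -- (c) `λ̃(Pmin)` is attained by some element of `S(Pmin)`
    (hattain : ∃ X'' : Matrix (Fin M) (Fin M) ℂ, X''.PosSemidef ∧
        (Matrix.trace (E0 * X'')).re ≤ Pmin ∧
        ∀ X : Matrix (Fin M) (Fin M) ℂ, X.PosSemidef →
          (Matrix.trace (E0 * X)).re ≤ Pmin →
          minOver hN (fun i =>
            (Matrix.trace (E1 i * X)).re /
              (γ i * ((Matrix.trace (E2 i * X)).re + σ i ^ 2))) ≤
          minOver hN (fun i =>
            (Matrix.trace (E1 i * X'')).re /
              (γ i * ((Matrix.trace (E2 i * X'')).re + σ i ^ 2)))) :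
    Pmin = PR ∧ (Matrix.trace (E0 * Xopt)).re = PR ∧
      (∀ i, (Matrix.trace (E1 i * Xopt)).re ≥
        γ i * ((Matrix.trace (E2 i * Xopt)).re + σ i ^ 2)) ∧
      (Matrix.trace (E0 * Xopt)).re = Pmin :=
  stmt1_general hN E1 E2 hE2 E0 γ σ hγ hσ PR Pmin Xopt hXoptPSD hXoptP hXoptval hXoptmax Xt hXtPSD
    hXtT hXtval hPminlb
end

section
/- Let G ⊆ ℝ^n be a nonempty normal set contained in the nonnegative orthant, let H = {w ∈ ℝ^n : w_i ≥ 1 for all i}, and let T be a finite set of nonnegative vectors whose polyblock P = ∪_{v∈T}[0,v] satisfies G ∩ H ⊆ P. Let z ∈ T have all coordinates strictly positive and z ∉ G, and suppose λ* ≥ 0 satisfies λ*·z ∈ G and α ≤ λ* for every α ≥ 0 with α·z ∈ G. Set y = λ*·z, let z(i) be z with its i-th coordinate replaced by y_i, and let T' = (T \ {z}) ∪ {z(1),…,z(n)} with polyblock P' = ∪_{v∈T'}[0,v]. Then G ∩ H ⊆ P' ⊆ P. -/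
/-!
Replacing the vertex `z` of the polyblock by `z(1), …, z(n)` carves out of the box `[0, z]`
exactly the points `x` with `λ* z_i < x_i` for every `i`. Such a point dominates `α • z` for some
`α > λ*`, so by normality it cannot lie in `G` without contradicting the maximality of `λ*`.
Conversely each `z(i)` lies below `z`, because `λ* < 1` (otherwise `z ≤ λ* • z ∈ G`).
-/

open Filter Function Set Topology

variable {ι : Type*}

theorem exists_gt_smul_le_of_forall_mul_lt [Finite ι] {z x : ι → ℝ} {lam : ℝ}
    (h : ∀ i, lam * z i < x i) : ∃ α, lam < α ∧ α • z ≤ x := by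
  have hnear : ∀ᶠ α in 𝓝 lam, ∀ i, α * z i < x i :=
    eventually_all.2 fun i =>
      (tendsto_id.mul_const (z i)).eventually_lt tendsto_const_nhds (h i)
  obtain ⟨α, hαx, hlamα⟩ := ((hnear.filter_mono nhdsWithin_le_nhds).and
    (self_mem_nhdsWithin (s := Ioi lam))).exists
  exact ⟨α, hlamα, fun i => (hαx i).le⟩

section NormalSet

variable {G : Set (ι → ℝ)} (hnormal : ∀ z' z : ι → ℝ, 0 ≤ z' → z' ≤ z → z ∈ G → z' ∈ G)
include hnormal

theorem lt_one_of_smul_mem_of_notMem {z : ι → ℝ} {lam : ℝ} (hz : 0 ≤ z) (hzG : z ∉ G)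
    (hlamG : lam • z ∈ G) : lam < 1 := by
  by_contra! hlam
  exact hzG (hnormal z (lam • z) hz (fun i => le_mul_of_one_le_left (hz i) hlam) hlamG)

theorem exists_apply_le_mul_of_mem [Finite ι] {z x : ι → ℝ} {lam : ℝ} (hz : 0 ≤ z)
    (hlam : 0 ≤ lam) (hmax : ∀ α : ℝ, 0 ≤ α → α • z ∈ G → α ≤ lam) (hxG : x ∈ G) :
    ∃ i, x i ≤ lam * z i := by
  by_contra! hlt
  obtain ⟨α, hlamα, hαx⟩ := exists_gt_smul_le_of_forall_mul_lt hlt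
  have hα : 0 ≤ α := hlam.trans hlamα.le
  exact (hmax α hα (hnormal _ x (smul_nonneg hα hz) hαx hxG)).not_gt hlamα

end NormalSet

theorem mem_Icc_update_of_le [DecidableEq ι] {x z : ι → ℝ} {i : ι} {c : ℝ}
    (hx : x ∈ Icc 0 z) (hxi : x i ≤ c) : x ∈ Icc 0 (update z i c) :=
  ⟨hx.1, le_update_iff.2 ⟨hxi, fun j _ => hx.2 j⟩⟩

theorem update_mul_le_self [DecidableEq ι] {z : ι → ℝ} (hz : 0 ≤ z) {lam : ℝ} (hlam : lam ≤ 1)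
    (i : ι) : update z i (lam * z i) ≤ z :=
  update_le_self_iff.2 (mul_le_of_le_one_left (hz i) hlam)

theorem stmt4_general {n : ℕ} (G : Set (Fin n → ℝ))
    (hnormal : ∀ z' z : Fin n → ℝ, 0 ≤ z' → z' ≤ z → z ∈ G → z' ∈ G)
    (H : Set (Fin n → ℝ))
    (T : Finset (Fin n → ℝ))
    (hcover : G ∩ H ⊆ ⋃ v ∈ T, Set.Icc (0 : Fin n → ℝ) v)
    (z : Fin n → ℝ) (hzT : z ∈ T) (hz : ∀ i, 0 < z i) (hzG : z ∉ G)
    (lam : ℝ) (hlam : 0 ≤ lam) (hlamG : lam • z ∈ G)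
    (hmax : ∀ α : ℝ, 0 ≤ α → α • z ∈ G → α ≤ lam)
    (T' : Finset (Fin n → ℝ))
    (hT' : ∀ v : Fin n → ℝ, v ∈ T' ↔
      (v ∈ T ∧ v ≠ z) ∨ ∃ i : Fin n, v = Function.update z i (lam * z i)) :
    G ∩ H ⊆ (⋃ v ∈ T', Set.Icc (0 : Fin n → ℝ) v) ∧
      (⋃ v ∈ T', Set.Icc (0 : Fin n → ℝ) v) ⊆ ⋃ v ∈ T, Set.Icc (0 : Fin n → ℝ) v := by
  have hz0 : 0 ≤ z := fun i => (hz i).le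
  constructor
  · intro x hx
    obtain ⟨v, hvT, hxv⟩ := mem_iUnion₂.1 (hcover hx)
    by_cases hvz : v = z
    · subst hvz
      obtain ⟨i, hxi⟩ := exists_apply_le_mul_of_mem hnormal hz0 hlam hmax hx.1
      exact mem_iUnion₂.2 ⟨_, (hT' _).2 (Or.inr ⟨i, rfl⟩), mem_Icc_update_of_le hxv hxi⟩
    · exact mem_iUnion₂.2 ⟨v, (hT' v).2 (Or.inl ⟨hvT, hvz⟩), hxv⟩
  · have hlam1 := lt_one_of_smul_mem_of_notMem hnormal hz0 hzG hlamG
    refine iUnion₂_subset fun v hv => ?_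
    rcases (hT' v).1 hv with ⟨hvT, -⟩ | ⟨i, rfl⟩
    · exact subset_biUnion_of_mem (u := fun v => Icc 0 v) hvT
    · exact (Icc_subset_Icc_right (update_mul_le_self hz0 hlam1.le i)).trans
        (subset_biUnion_of_mem (u := fun v => Icc 0 v) hzT)

/-- Validity of the polyblock outer approximation step: if the polyblock with vertex set `T`
contains `G ∩ H`, `z ∈ T` has strictly positive coordinates with `z ∉ G`, `λ* = max {α ≥ 0 :
α • z ∈ G}` is attained, and `T'` is obtained from `T` by replacing the vertex `z` with the
vertices `z(1), …, z(n)` (where `z(i)` is `z` with its `i`-th coordinate replaced by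
`λ* * z i`), then `G ∩ H ⊆ P' ⊆ P` for the corresponding polyblocks. -/
theorem stmt4 {n : ℕ} (G : Set (Fin n → ℝ)) (hne : G.Nonempty)
    (hGpos : ∀ w ∈ G, (0 : Fin n → ℝ) ≤ w)
    (hnormal : ∀ z' z : Fin n → ℝ, 0 ≤ z' → z' ≤ z → z ∈ G → z' ∈ G)
    (H : Set (Fin n → ℝ)) (hH : H = {w : Fin n → ℝ | ∀ i, 1 ≤ w i})
    (T : Finset (Fin n → ℝ)) (hT : ∀ v ∈ T, (0 : Fin n → ℝ) ≤ v)
    (hcover : G ∩ H ⊆ ⋃ v ∈ T, Set.Icc (0 : Fin n → ℝ) v)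
    (z : Fin n → ℝ) (hzT : z ∈ T) (hz : ∀ i, 0 < z i) (hzG : z ∉ G)
    (lam : ℝ) (hlam : 0 ≤ lam) (hlamG : lam • z ∈ G)
    (hmax : ∀ α : ℝ, 0 ≤ α → α • z ∈ G → α ≤ lam)
    (T' : Finset (Fin n → ℝ))
    (hT' : ∀ v : Fin n → ℝ, v ∈ T' ↔
      (v ∈ T ∧ v ≠ z) ∨ ∃ i : Fin n, v = Function.update z i (lam * z i)) :
    G ∩ H ⊆ (⋃ v ∈ T', Set.Icc (0 : Fin n → ℝ) v) ∧
      (⋃ v ∈ T', Set.Icc (0 : Fin n → ℝ) v) ⊆ ⋃ v ∈ T, Set.Icc (0 : Fin n → ℝ) v :=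
  stmt4_general G hnormal H T hcover z hzT hz hzG lam hlam hlamG hmax T' hT'
end
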